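/- arXiv:1709.02462 — 5 statements merged into one kernel-verified Lean document; each statement's English description precedes it below -/
import Mathlib

section
/- Let h : [a,b] → ℝ be concave with 0 ≤ h ≤ 1, and let J ⊆ [a,b] be an interval on which h(x) ≥ 1 - L⁻², located in the middle half of an interval of length L on which h ≥ 1 - L⁻². Then |h'(x)| ≤ C·L⁻³ for all x ∈ J where h is differentiable, for an absolute constant C. -/
open Set

/-! A concave function that stays within `ε` of its value at `x` at points `p < x < q`
lying at distance at least `δ` from `x` has one-sided derivatives at `x` of size at most `ε / δ`,
since they are squeezed between the secant slopes over `[p, x]` and `[x, q]`. With `δ = L / 4`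
and `ε = L⁻²`, taking `p, q` the endpoints of `I` and using `h ≤ 1` gives the bound `4 L⁻³`. -/

namespace ConcaveOn

variable {S : Set ℝ} {f : ℝ → ℝ} {f' p x q δ ε : ℝ}

lemma le_div_of_hasDerivWithinAt_Iio (hf : ConcaveOn ℝ S f) (hp : p ∈ S) (hx : x ∈ S)
    (hδ : 0 < δ) (hpx : δ ≤ x - p) (hε : 0 ≤ ε) (hfp : f x - ε ≤ f p)
    (hf' : HasDerivWithinAt f f' (Iio x) x) : f' ≤ ε / δ :=
  calc f' ≤ slope f p x := hf.le_slope_of_hasDerivWithinAt_Iio hp hx (by linarith) hf'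
    _ = (f x - f p) / (x - p) := slope_def_field f p x
    _ ≤ ε / δ := div_le_div₀ hε (by linarith) hδ hpx

lemma neg_div_le_of_hasDerivWithinAt_Ioi (hf : ConcaveOn ℝ S f) (hx : x ∈ S) (hq : q ∈ S)
    (hδ : 0 < δ) (hxq : δ ≤ q - x) (hε : 0 ≤ ε) (hfq : f x - ε ≤ f q)
    (hf' : HasDerivWithinAt f f' (Ioi x) x) : -(ε / δ) ≤ f' :=
  calc -(ε / δ) ≤ -((f x - f q) / (q - x)) :=
        neg_le_neg (div_le_div₀ hε (by linarith) hδ hxq)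
    _ = slope f x q := by rw [slope_def_field, ← neg_div, neg_sub]
    _ ≤ f' := hf.slope_le_of_hasDerivWithinAt_Ioi hx hq (by linarith) hf'

lemma abs_deriv_le_div (hf : ConcaveOn ℝ S f) (hp : p ∈ S) (hx : x ∈ S) (hq : q ∈ S)
    (hδ : 0 < δ) (hpx : δ ≤ x - p) (hxq : δ ≤ q - x) (hε : 0 ≤ ε)
    (hfp : f x - ε ≤ f p) (hfq : f x - ε ≤ f q) (hd : DifferentiableAt ℝ f x) :
    |deriv f x| ≤ ε / δ :=
  abs_le.2
    ⟨hf.neg_div_le_of_hasDerivWithinAt_Ioi hx hq hδ hxq hε hfq hd.hasDerivAt.hasDerivWithinAt,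
      hf.le_div_of_hasDerivWithinAt_Iio hp hx hδ hpx hε hfp hd.hasDerivAt.hasDerivWithinAt⟩

end ConcaveOn

/-- For a concave `h : [a,b] → [0,1]` with `h ≥ 1 - L⁻²` on an interval
`I = [c, c+L] ⊆ [a,b]`, one has `|h'(x)| ≤ C L⁻³` for all `x` in the middle half
`J = [c + L/4, c + 3L/4]` where `h` is differentiable, for an absolute constant `C`. -/
theorem stmt_1 : ∃ C : ℝ, 0 < C ∧
    ∀ (a b c L : ℝ) (h : ℝ → ℝ),
      ConcaveOn ℝ (Set.Icc a b) h →
      (∀ x ∈ Set.Icc a b, 0 ≤ h x ∧ h x ≤ 1) →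
      2 ≤ L →
      Set.Icc c (c + L) ⊆ Set.Icc a b →
      (∀ x ∈ Set.Icc c (c + L), 1 - L⁻¹ ^ 2 ≤ h x) →
      ∀ x ∈ Set.Icc (c + L / 4) (c + 3 * L / 4),
        DifferentiableAt ℝ h x → |deriv h x| ≤ C * L⁻¹ ^ 3 := by
  refine ⟨4, by norm_num, fun a b c L h hconc hbd hL hsub hlb x ⟨hcx, hxc⟩ hd => ?_⟩
  have hL0 : 0 < L := by linarith
  have hc : c ∈ Icc c (c + L) := ⟨le_rfl, by linarith⟩
  have hcL : c + L ∈ Icc c (c + L) := ⟨by linarith, le_rfl⟩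
  have hx : x ∈ Icc a b := hsub ⟨by linarith, by linarith⟩
  have hhx : h x - L⁻¹ ^ 2 ≤ 1 - L⁻¹ ^ 2 := by linarith [(hbd x hx).2]
  calc |deriv h x| ≤ L⁻¹ ^ 2 / (L / 4) :=
        hconc.abs_deriv_le_div (δ := L / 4) (hsub hc) hx (hsub hcL) (by positivity) (by linarith)
          (by linarith) (by positivity) (hhx.trans (hlb c hc)) (hhx.trans (hlb _ hcL)) hd
    _ = 4 * L⁻¹ ^ 3 := by field_simp
end

section
/- If u is a positive C³ solution of Δu = -λ u on an open set U ⊆ ℝ², then v := ∂_x∂_y(log u) satisfies Δv + 2∇(log u)·∇v = 2(λ + |∇ log u|²)·v on U. -/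
open Real ContDiff

noncomputable def pdx (f : ℝ → ℝ → ℝ) : ℝ → ℝ → ℝ := fun x y => deriv (fun t => f t y) x
noncomputable def pdy (f : ℝ → ℝ → ℝ) : ℝ → ℝ → ℝ := fun x y => deriv (fun t => f x t) y

noncomputable def pd (v : ℝ × ℝ) (f : ℝ × ℝ → ℝ) : ℝ × ℝ → ℝ := fun p => fderiv ℝ f p v

lemma infty_succ_le : (∞ : WithTop ℕ∞) + 1 ≤ ∞ := by
  simp

lemma mdiff {U : Set (ℝ × ℝ)} (hU : IsOpen U) {f : ℝ × ℝ → ℝ} (hf : ContDiffOn ℝ ∞ f U)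
    {q : ℝ × ℝ} (hq : q ∈ U) : DifferentiableAt ℝ f q :=
  (hf.contDiffAt (hU.mem_nhds hq)).differentiableAt (by norm_num)

lemma contDiffOn_pd {U : Set (ℝ × ℝ)} (hU : IsOpen U) {f : ℝ × ℝ → ℝ}
    (hf : ContDiffOn ℝ ∞ f U) (v : ℝ × ℝ) : ContDiffOn ℝ ∞ (pd v f) U :=
  (hf.fderiv_of_isOpen hU infty_succ_le).clm_apply contDiffOn_const

lemma pd_congr_on {U : Set (ℝ × ℝ)} (hU : IsOpen U) {f g : ℝ × ℝ → ℝ}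
    (h : ∀ q ∈ U, f q = g q) {q : ℝ × ℝ} (hq : q ∈ U) (v : ℝ × ℝ) :
    pd v f q = pd v g q := by
  have : f =ᶠ[nhds q] g := Filter.eventuallyEq_of_mem (hU.mem_nhds hq) h
  simp only [pd, this.fderiv_eq]

lemma pd_add {f g : ℝ × ℝ → ℝ} {q : ℝ × ℝ} (hf : DifferentiableAt ℝ f q)
    (hg : DifferentiableAt ℝ g q) (v : ℝ × ℝ) :
    pd v (fun r => f r + g r) q = pd v f q + pd v g q := by
  simp [pd, fderiv_fun_add hf hg]

lemma pd_sub {f g : ℝ × ℝ → ℝ} {q : ℝ × ℝ} (hf : DifferentiableAt ℝ f q)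
    (hg : DifferentiableAt ℝ g q) (v : ℝ × ℝ) :
    pd v (fun r => f r - g r) q = pd v f q - pd v g q := by
  simp [pd, fderiv_fun_sub hf hg]

lemma pd_const (c : ℝ) (q v : ℝ × ℝ) : pd v (fun _ => c) q = 0 := by
  simp [pd]

lemma pd_mul {f g : ℝ × ℝ → ℝ} {q : ℝ × ℝ} (hf : DifferentiableAt ℝ f q)
    (hg : DifferentiableAt ℝ g q) (v : ℝ × ℝ) :
    pd v (fun r => f r * g r) q = f q * pd v g q + g q * pd v f q := by
  simp [pd, fderiv_fun_mul hf hg]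

lemma pd_const_mul {f : ℝ × ℝ → ℝ} {q : ℝ × ℝ} (hf : DifferentiableAt ℝ f q) (c : ℝ)
    (v : ℝ × ℝ) : pd v (fun r => c * f r) q = c * pd v f q := by
  simp [pd, fderiv_const_mul hf c]

lemma pd_comm {U : Set (ℝ × ℝ)} (hU : IsOpen U) {f : ℝ × ℝ → ℝ}
    (hf : ContDiffOn ℝ ∞ f U) {q : ℝ × ℝ} (hq : q ∈ U) (v w : ℝ × ℝ) :
    pd v (pd w f) q = pd w (pd v f) q := by
  have hfd : DifferentiableAt ℝ (fderiv ℝ f) q :=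
    (((hf.contDiffAt (hU.mem_nhds hq)).fderiv_right (m := 1)
      (by
        rw [show ((1:WithTop ℕ∞) + 1) = ((2:ℕ∞) : WithTop ℕ∞) by rfl]
        exact WithTop.coe_le_coe.2 le_top)).differentiableAt (by norm_num))
  have h1 : ∀ ww vv : ℝ × ℝ, pd vv (pd ww f) q = fderiv ℝ (fderiv ℝ f) q vv ww := by
    intro ww vv
    have h := (hfd.hasFDerivAt.clm_apply (hasFDerivAt_const ww q)).fderiv
    show fderiv ℝ (fun r => fderiv ℝ f r ww) q vv = _
    rw [h]
    simp
  have hsym : ∀ aa bb : ℝ × ℝ, fderiv ℝ (fderiv ℝ f) q aa bb = fderiv ℝ (fderiv ℝ f) q bb aa := by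
    intro aa bb
    apply second_derivative_symmetric_of_eventually
    · filter_upwards [hU.mem_nhds hq] with r hr using (mdiff hU hf hr).hasFDerivAt
    · exact hfd.hasFDerivAt
  rw [h1 w v, h1 v w, hsym]

lemma pdx_eq {U : Set (ℝ × ℝ)} (hU : IsOpen U) {g : ℝ → ℝ → ℝ} {G : ℝ × ℝ → ℝ}
    (hG : ContDiffOn ℝ ∞ G U) (hgG : ∀ q ∈ U, g q.1 q.2 = G q) :
    ∀ q ∈ U, pdx g q.1 q.2 = pd (1, 0) G q := by
  intro q hq
  have hqU : U ∈ nhds (q.1, q.2) := by rw [Prod.mk.eta]; exact hU.mem_nhds hq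
  have hcont : Continuous fun t : ℝ => ((t, q.2) : ℝ × ℝ) := by continuity
  have hev : (fun t => g t q.2) =ᶠ[nhds q.1] fun t => G (t, q.2) := by
    filter_upwards [hcont.continuousAt.preimage_mem_nhds hqU] with t ht
    exact hgG _ ht
  have hG' : HasFDerivAt G (fderiv ℝ G q) (q.1, q.2) := by
    rw [Prod.mk.eta]; exact (mdiff hU hG hq).hasFDerivAt
  have hline : HasDerivAt (fun t : ℝ => ((t, q.2) : ℝ × ℝ)) (1, 0) q.1 :=
    (hasDerivAt_id q.1).prodMk (hasDerivAt_const q.1 q.2)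
  have hder : HasDerivAt (fun t => G (t, q.2)) (fderiv ℝ G q (1, 0)) q.1 :=
    hG'.comp_hasDerivAt q.1 hline
  show deriv (fun t => g t q.2) q.1 = _
  rw [hev.deriv_eq, hder.deriv]; rfl

lemma pdy_eq {U : Set (ℝ × ℝ)} (hU : IsOpen U) {g : ℝ → ℝ → ℝ} {G : ℝ × ℝ → ℝ}
    (hG : ContDiffOn ℝ ∞ G U) (hgG : ∀ q ∈ U, g q.1 q.2 = G q) :
    ∀ q ∈ U, pdy g q.1 q.2 = pd (0, 1) G q := by
  intro q hq
  have hqU : U ∈ nhds (q.1, q.2) := by rw [Prod.mk.eta]; exact hU.mem_nhds hq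
  have hcont : Continuous fun t : ℝ => ((q.1, t) : ℝ × ℝ) := by continuity
  have hev : (fun t => g q.1 t) =ᶠ[nhds q.2] fun t => G (q.1, t) := by
    filter_upwards [hcont.continuousAt.preimage_mem_nhds hqU] with t ht
    exact hgG _ ht
  have hG' : HasFDerivAt G (fderiv ℝ G q) (q.1, q.2) := by
    rw [Prod.mk.eta]; exact (mdiff hU hG hq).hasFDerivAt
  have hline : HasDerivAt (fun t : ℝ => ((q.1, t) : ℝ × ℝ)) (0, 1) q.2 :=
    (hasDerivAt_const q.2 q.1).prodMk (hasDerivAt_id q.2)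
  have hder : HasDerivAt (fun t => G (q.1, t)) (fderiv ℝ G q (0, 1)) q.2 :=
    hG'.comp_hasDerivAt q.2 hline
  show deriv (fun t => g q.1 t) q.2 = _
  rw [hev.deriv_eq, hder.deriv]; rfl

lemma pd_neg {f : ℝ × ℝ → ℝ} {q : ℝ × ℝ} (v : ℝ × ℝ) :
    pd v (fun r => -(f r)) q = -pd v f q := by
  simp [pd, fderiv_neg]

/-- If `u > 0` is smooth with `Δu = -λu` on an open `U ⊆ ℝ²`, then
`v := ∂_x∂_y (log u)` satisfies `Δv + 2 ∇(log u)·∇v = 2 (λ + |∇ log u|²) v` on `U`. -/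
theorem stmt_6 (U : Set (ℝ × ℝ)) (lam : ℝ) (u : ℝ → ℝ → ℝ)
    (hU : IsOpen U)
    (hpos : ∀ p ∈ U, 0 < u p.1 p.2)
    (hreg : ContDiffOn ℝ (⊤ : ℕ∞) (fun p : ℝ × ℝ => u p.1 p.2) U)
    (heq : ∀ p ∈ U, pdx (pdx u) p.1 p.2 + pdy (pdy u) p.1 p.2 = -lam * u p.1 p.2) :
    ∀ p ∈ U,
      (fun lu v : ℝ → ℝ → ℝ =>
        pdx (pdx v) p.1 p.2 + pdy (pdy v) p.1 p.2 +
            2 * (pdx lu p.1 p.2 * pdx v p.1 p.2 + pdy lu p.1 p.2 * pdy v p.1 p.2) =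
          2 * (lam + (pdx lu p.1 p.2) ^ 2 + (pdy lu p.1 p.2) ^ 2) * v p.1 p.2)
        (fun x y => Real.log (u x y)) (pdx (pdy fun x y => Real.log (u x y))) := by
  intro p hp
  have hFs : ContDiffOn ℝ ∞ (fun p : ℝ × ℝ => u p.1 p.2) U := hreg.of_le (by simp)
  set F : ℝ × ℝ → ℝ := fun p : ℝ × ℝ => u p.1 p.2 with hFdef
  have hFne : ∀ q ∈ U, F q ≠ 0 := fun q hq => (hpos q hq).ne'
  set W : ℝ × ℝ → ℝ := fun p : ℝ × ℝ => Real.log (F p) with hWdef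
  have hWs : ContDiffOn ℝ ∞ W U := hFs.log hFne
  set a : ℝ × ℝ → ℝ := pd (1, 0) W with hadef
  set b : ℝ × ℝ → ℝ := pd (0, 1) W with hbdef
  have has : ContDiffOn ℝ ∞ a U := contDiffOn_pd hU hWs _
  have hbs : ContDiffOn ℝ ∞ b U := contDiffOn_pd hU hWs _
  set V : ℝ × ℝ → ℝ := pd (1, 0) b with hVdef
  have hVs : ContDiffOn ℝ ∞ V U := contDiffOn_pd hU hbs _
  -- translate the PDE for u
  have hpdxu : ∀ q ∈ U, pdx u q.1 q.2 = pd (1, 0) F q := pdx_eq hU hFs (fun q hq => rfl)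
  have hpdyu : ∀ q ∈ U, pdy u q.1 q.2 = pd (0, 1) F q := pdy_eq hU hFs (fun q hq => rfl)
  have hlap : ∀ q ∈ U, pd (1, 0) (pd (1, 0) F) q + pd (0, 1) (pd (0, 1) F) q = -lam * F q := by
    intro q hq
    rw [← pdx_eq hU (contDiffOn_pd hU hFs _) hpdxu q hq,
        ← pdy_eq hU (contDiffOn_pd hU hFs _) hpdyu q hq]
    exact heq q hq
  -- logarithmic derivative:  F * a = ∂₁F  and  F * b = ∂₂F  on U
  have hlog : ∀ q ∈ U, ∀ v : ℝ × ℝ, pd v W q = (F q)⁻¹ * pd v F q := by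
    intro q hq v
    have h := ((mdiff hU hFs hq).hasFDerivAt.log (hFne q hq)).fderiv
    show fderiv ℝ W q v = _
    rw [hWdef, h]
    simp [pd]
  have haF : ∀ q ∈ U, F q * a q = pd (1, 0) F q := by
    intro q hq
    rw [hadef, hlog q hq]
    field_simp [hFne q hq]
  have hbF : ∀ q ∈ U, F q * b q = pd (0, 1) F q := by
    intro q hq
    rw [hbdef, hlog q hq]
    field_simp [hFne q hq]
  -- Identity I :  ∂₁a + ∂₂b = -lam - a² - b²  on U
  have hI : ∀ q ∈ U, pd (1, 0) a q + pd (0, 1) b q = -lam - a q * a q - b q * b q := by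
    intro q hq
    have h1 : pd (1, 0) (fun r => F r * a r) q = pd (1, 0) (pd (1, 0) F) q :=
      pd_congr_on hU haF hq _
    rw [pd_mul (mdiff hU hFs hq) (mdiff hU has hq)] at h1
    have h2 : pd (0, 1) (fun r => F r * b r) q = pd (0, 1) (pd (0, 1) F) q :=
      pd_congr_on hU hbF hq _
    rw [pd_mul (mdiff hU hFs hq) (mdiff hU hbs hq)] at h2
    have h3 := hlap q hq
    have h4 := haF q hq
    have h5 := hbF q hq
    have hFq := hFne q hq
    have key : F q * (pd (1, 0) a q + pd (0, 1) b q)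
        = F q * (-lam - a q * a q - b q * b q) := by
      linear_combination h1 + h2 + h3 + a q * h4 + b q * h5
    exact mul_left_cancel₀ hFq key
  -- Identity II : differentiate I in direction (0,1)
  have hcommW : ∀ q ∈ U, pd (0, 1) a q = V q := by
    intro q hq
    exact pd_comm hU hWs hq (0, 1) (1, 0)
  have hII : ∀ q ∈ U, pd (0, 1) (pd (1, 0) a) q + pd (0, 1) (pd (0, 1) b) q
      = -(2 * (a q * V q)) - 2 * (b q * pd (0, 1) b q) := by
    intro q hq
    have da := mdiff hU has hq
    have db := mdiff hU hbs hq
    have hL : pd (0, 1) (fun r => pd (1, 0) a r + pd (0, 1) b r) q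
        = pd (0, 1) (fun r => -lam - a r * a r - b r * b r) q := pd_congr_on hU hI hq _
    rw [pd_add (mdiff hU (contDiffOn_pd hU has _) hq) (mdiff hU (contDiffOn_pd hU hbs _) hq)]
      at hL
    rw [pd_sub ((differentiableAt_const (-lam)).fun_sub (da.fun_mul da)) (db.fun_mul db),
        pd_sub (differentiableAt_const (-lam)) (da.fun_mul da),
        pd_const, pd_mul da da, pd_mul db db] at hL
    rw [hcommW q hq] at hL
    linear_combination hL
  -- Identity III : differentiate II in direction (1,0), at the point p
  have h21a : ∀ r ∈ U, pd (0, 1) (pd (1, 0) a) r = pd (1, 0) V r := by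
    intro r hr
    rw [pd_comm hU has hr (0, 1) (1, 0)]
    exact pd_congr_on hU hcommW hr _
  have h12b : ∀ r ∈ U, pd (1, 0) (pd (0, 1) b) r = pd (0, 1) V r := by
    intro r hr
    exact pd_comm hU hbs hr (1, 0) (0, 1)
  have hT1 : pd (1, 0) (pd (0, 1) (pd (1, 0) a)) p = pd (1, 0) (pd (1, 0) V) p :=
    pd_congr_on hU h21a hp _
  have hT2 : pd (1, 0) (pd (0, 1) (pd (0, 1) b)) p = pd (0, 1) (pd (0, 1) V) p := by
    rw [pd_comm hU (contDiffOn_pd hU hbs _) hp (1, 0) (0, 1)]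
    exact pd_congr_on hU h12b hp _
  have hIII : pd (1, 0) (pd (1, 0) V) p + pd (0, 1) (pd (0, 1) V) p
      = -(2 * (pd (1, 0) a p * V p + a p * pd (1, 0) V p))
        - 2 * (V p * pd (0, 1) b p + b p * pd (0, 1) V p) := by
    have da := mdiff hU has hp
    have db := mdiff hU hbs hp
    have dV := mdiff hU hVs hp
    have d2b := mdiff hU (contDiffOn_pd hU hbs (0, 1)) hp
    have hL : pd (1, 0) (fun r => pd (0, 1) (pd (1, 0) a) r + pd (0, 1) (pd (0, 1) b) r) p
        = pd (1, 0) (fun r => -(2 * (a r * V r)) - 2 * (b r * pd (0, 1) b r)) p :=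
      pd_congr_on hU hII hp _
    rw [pd_add (mdiff hU (contDiffOn_pd hU (contDiffOn_pd hU has _) _) hp)
        (mdiff hU (contDiffOn_pd hU (contDiffOn_pd hU hbs _) _) hp)] at hL
    rw [hT1, hT2] at hL
    rw [pd_sub ((da.fun_mul dV).const_mul 2).fun_neg ((db.fun_mul d2b).const_mul 2),
        pd_neg, pd_const_mul (da.fun_mul dV), pd_const_mul (db.fun_mul d2b),
        pd_mul da dV, pd_mul db d2b] at hL
    rw [h12b p hp] at hL
    have hVp : pd (1, 0) b p = V p := rfl
    rw [hVp] at hL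
    linear_combination hL
  -- translate the goal
  have hlu : ∀ q ∈ U, (fun x y => Real.log (u x y)) q.1 q.2 = W q := fun q hq => rfl
  have c1 : ∀ q ∈ U, pdx (fun x y => Real.log (u x y)) q.1 q.2 = a q := pdx_eq hU hWs hlu
  have c2 : ∀ q ∈ U, pdy (fun x y => Real.log (u x y)) q.1 q.2 = b q := pdy_eq hU hWs hlu
  have c3 : ∀ q ∈ U, pdx (pdy fun x y => Real.log (u x y)) q.1 q.2 = V q := pdx_eq hU hbs c2
  have c4 : ∀ q ∈ U, pdx (pdx (pdy fun x y => Real.log (u x y))) q.1 q.2 = pd (1, 0) V q :=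
    pdx_eq hU hVs c3
  have c5 : ∀ q ∈ U, pdy (pdx (pdy fun x y => Real.log (u x y))) q.1 q.2 = pd (0, 1) V q :=
    pdy_eq hU hVs c3
  have c6 : ∀ q ∈ U, pdx (pdx (pdx (pdy fun x y => Real.log (u x y)))) q.1 q.2
      = pd (1, 0) (pd (1, 0) V) q := pdx_eq hU (contDiffOn_pd hU hVs _) c4
  have c7 : ∀ q ∈ U, pdy (pdy (pdx (pdy fun x y => Real.log (u x y)))) q.1 q.2
      = pd (0, 1) (pd (0, 1) V) q := pdy_eq hU (contDiffOn_pd hU hVs _) c5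
  simp only [c1 p hp, c2 p hp, c3 p hp, c4 p hp, c5 p hp, c6 p hp, c7 p hp]
  linear_combination hIII - 2 * V p * hI p hp
end

section
/- Let u be a C² function on a domain containing the strip Ω^(α) = {(x,y) ∈ Ω : |y| ≤ α} with Δu = -λu, u = 0 on ∂Ω, 0 < u ≤ 1, λ ≤ π² + C L⁻², and suppose the superlevel set {u ≥ 1-ε} is contained in {|y| ≤ α}. If α < c₁√ε for a sufficiently small absolute constant c₁ (depending on C), then sup u < 1 on Ω^(α); consequently, if max u = 1 is attained in Ω^(α), the superlevel set {u ≥ 1-ε} cannot fit between the lines y = ±α with α < c₁√ε. -/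
/-!
Compare `u` with `v(x, y) = cos (b y)`, where `b² = π² + |C| + 1 > λ`, on the strip
`|y| ≤ α'` for some `α < α' < √ε / b`. There `v > 1 - ε`, and `Δv = -b² v`. Let `q` maximize
`u / v` on the closure of `Ω` intersected with the strip. It cannot lie on `∂Ω`, where `u = 0`.
If it were an interior point, then `w = u - (u(q) / v(q)) v` would have a local maximum at `q`
with `Δw(q) = (b² - λ) u(q) > 0`. So `q` lies on an edge `|y| = α'`, outside the superlevel
set, so `u(q) < 1 - ε < v(q)`. Hence `u / v < 1`, i.e. `u < v ≤ 1`, on the whole strip.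
-/

open Real Filter Topology

/-- The Laplacian on `ℝ × ℝ` via the second iterated Fréchet derivative. -/
noncomputable def lap2 (u : ℝ × ℝ → ℝ) (p : ℝ × ℝ) : ℝ :=
  iteratedFDeriv ℝ 2 u p ![(1, 0), (1, 0)] + iteratedFDeriv ℝ 2 u p ![(0, 1), (0, 1)]

theorem IsLocalMax.deriv_deriv_nonpos {f : ℝ → ℝ} {x₀ : ℝ} (h : IsLocalMax f x₀)
    (hc : ContinuousAt f x₀) : deriv (deriv f) x₀ ≤ 0 := by
  by_contra! hpos
  -- The sufficient second-derivative test would make `x₀` a local minimum as well, so `f` is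
  -- locally constant and `f''(x₀) = 0`.
  have hmin : IsLocalMin f x₀ := isLocalMin_of_deriv_deriv_pos hpos h.deriv_eq_zero hc
  have hconst : f =ᶠ[𝓝 x₀] fun _ ↦ f x₀ :=
    (h.and hmin).mono fun _ hx ↦ le_antisymm hx.1 hx.2
  have hderiv : deriv f =ᶠ[𝓝 x₀] fun _ ↦ 0 := by
    simpa using hconst.deriv
  simp [hderiv.deriv_eq] at hpos

section Directional

variable {E F : Type*} [NormedAddCommGroup E] [NormedSpace ℝ E] [NormedAddCommGroup F]
  [NormedSpace ℝ F]

theorem iteratedFDeriv_two_apply_self_eq_deriv_deriv {f : E → F} {q : E}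
    (hf : ContDiffAt ℝ 2 f q) (e : E) :
    iteratedFDeriv ℝ 2 f q ![e, e] = deriv (deriv fun t : ℝ ↦ f (q + t • e)) 0 := by
  have hline (t : ℝ) : HasDerivAt (fun t : ℝ ↦ q + t • e) e t := by
    simpa using ((hasDerivAt_id t).smul_const e).const_add q
  have htend : Tendsto (fun t : ℝ ↦ q + t • e) (𝓝 0) (𝓝 q) :=
    (hline 0).continuousAt.tendsto.congr' (by simp) |>.mono_right (by simp)
  have hderiv : deriv (fun t : ℝ ↦ f (q + t • e)) =ᶠ[𝓝 0]
      fun t : ℝ ↦ fderiv ℝ f (q + t • e) e := by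
    filter_upwards [htend.eventually (hf.eventually (by simp))] with t ht
    exact ((ht.differentiableAt (by simp)).hasFDerivAt.comp_hasDerivAt t (hline t)).deriv
  have hf' : HasFDerivAt (fderiv ℝ f) (fderiv ℝ (fderiv ℝ f) q) (q + (0 : ℝ) • e) := by
    simpa using ((hf.fderiv_right (m := 1) (by norm_num)).differentiableAt one_ne_zero).hasFDerivAt
  have hsecond : HasDerivAt (fun t : ℝ ↦ fderiv ℝ f (q + t • e) e)
      (fderiv ℝ (fderiv ℝ f) q e e) 0 := by
    have := (ContinuousLinearMap.apply ℝ F e).hasFDerivAt.comp_hasDerivAt 0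
      (hf'.comp_hasDerivAt 0 (hline 0))
    simpa [Function.comp_def] using this
  rw [hderiv.deriv_eq, hsecond.deriv, iteratedFDeriv_two_apply]
  simp

theorem IsLocalMax.iteratedFDeriv_two_apply_self_nonpos {f : E → ℝ} {q : E}
    (h : IsLocalMax f q) (hf : ContDiffAt ℝ 2 f q) (e : E) :
    iteratedFDeriv ℝ 2 f q ![e, e] ≤ 0 := by
  rw [iteratedFDeriv_two_apply_self_eq_deriv_deriv hf]
  have hline : ContinuousAt (fun t : ℝ ↦ q + t • e) 0 := by fun_prop
  have hq : q = q + (0 : ℝ) • e := by simp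
  refine IsLocalMax.deriv_deriv_nonpos ?_ ?_
  · exact IsMaxFilter.comp_tendsto (hq ▸ h) hline.tendsto
  · exact ContinuousAt.comp (hq ▸ hf.continuousAt) hline

end Directional

theorem IsLocalMax.lap2_nonpos {f : ℝ × ℝ → ℝ} {q : ℝ × ℝ} (h : IsLocalMax f q)
    (hf : ContDiffAt ℝ 2 f q) : lap2 f q ≤ 0 :=
  add_nonpos (h.iteratedFDeriv_two_apply_self_nonpos hf _)
    (h.iteratedFDeriv_two_apply_self_nonpos hf _)

theorem lap2_sub_const_mul {f g : ℝ × ℝ → ℝ} {q : ℝ × ℝ} (hf : ContDiffAt ℝ 2 f q)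
    (hg : ContDiffAt ℝ 2 g q) (c : ℝ) :
    lap2 (fun x ↦ f x - c * g x) q = lap2 f q - c * lap2 g q := by
  simp only [lap2, ← smul_eq_mul (a := c)]
  rw [fun_iteratedFDeriv_sub_apply hf (hg.const_smul c), iteratedFDeriv_const_smul_apply' hg]
  simp only [sub_apply, smul_apply, smul_eq_mul]
  ring

theorem Real.iteratedDeriv_two_cos (x : ℝ) : iteratedDeriv 2 cos x = -cos x := by
  simp [iteratedDeriv_succ]

theorem lap2_cos_mul_snd (b : ℝ) (q : ℝ × ℝ) :
    lap2 (fun x ↦ cos (b * x.2)) q = -b ^ 2 * cos (b * q.2) := by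
  set ℓ := b • ContinuousLinearMap.snd ℝ ℝ ℝ
  have hcomp : iteratedFDeriv ℝ 2 (fun x ↦ cos (b * x.2)) q =
      (iteratedFDeriv ℝ 2 cos (ℓ q)).compContinuousLinearMap fun _ ↦ ℓ :=
    ℓ.iteratedFDeriv_comp_right contDiff_cos q (n := 2) le_rfl
  simp [lap2, hcomp, iteratedFDeriv_apply_eq_iteratedDeriv_mul_prod, Real.iteratedDeriv_two_cos,
    ℓ, sq]

theorem not_isLocalMax_div_of_lap2_eq {u v : ℝ × ℝ → ℝ} {q : ℝ × ℝ} {lam μ : ℝ}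
    (hu : ContDiffAt ℝ 2 u q) (hv : ContDiffAt ℝ 2 v q)
    (hu_eq : lap2 u q = -lam * u q) (hv_eq : lap2 v q = -μ * v q) (hlam : lam < μ)
    (hu_pos : 0 < u q) (hv_pos : ∀ᶠ x in 𝓝 q, 0 < v x) :
    ¬IsLocalMax (fun x ↦ u x / v x) q := by
  intro hmax
  set M := u q / v q
  have hMv : M * v q = u q := div_mul_cancel₀ _ hv_pos.self_of_nhds.ne'
  have hwmax : IsLocalMax (fun x ↦ u x - M * v x) q := by
    filter_upwards [hmax, hv_pos] with x hx hvx
    linarith [(div_le_iff₀ hvx).mp hx]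
  have hlap := hwmax.lap2_nonpos (hu.sub (hv.const_smul M))
  have hlap_eq : lap2 (fun x ↦ u x - M * v x) q = (μ - lam) * u q := by
    rw [lap2_sub_const_mul hu hv, hu_eq, hv_eq]
    linear_combination μ * hMv
  linarith [mul_pos (sub_pos.mpr hlam) hu_pos]

theorem lt_of_superlevelSet_subset_interior {Ω T : Set (ℝ × ℝ)} {u v : ℝ × ℝ → ℝ}
    {lam μ c : ℝ} (hΩ : IsOpen Ω) (hΩ_bdd : Bornology.IsBounded Ω) (hT : IsClosed T)
    (hu_cont : ContinuousOn u (closure Ω)) (hu : ContDiffOn ℝ 2 u Ω)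
    (hu_eq : ∀ p ∈ Ω, lap2 u p = -lam * u p) (hu_bdry : ∀ p ∈ frontier Ω, u p = 0)
    (hu_pos : ∀ p ∈ Ω, 0 < u p) (hv : ContDiff ℝ 2 v) (hv_eq : ∀ p, lap2 v p = -μ * v p)
    (hlam : lam < μ) (hc : 0 ≤ c) (hv_gt : ∀ p ∈ T, c < v p)
    (hsuper : {p ∈ Ω | c ≤ u p} ⊆ interior T) :
    ∀ p ∈ Ω ∩ T, u p < v p := by
  intro p hp
  have hv_pos (x : ℝ × ℝ) (hx : x ∈ T) : 0 < v x := hc.trans_lt (hv_gt x hx)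
  have hpK : p ∈ closure Ω ∩ T := ⟨subset_closure hp.1, hp.2⟩
  obtain ⟨q, hqK, hqmax⟩ := (hΩ_bdd.isCompact_closure.inter_right hT).exists_isMaxOn ⟨p, hpK⟩
    ((hu_cont.mono Set.inter_subset_left).div hv.continuous.continuousOn
      fun x hx ↦ (hv_pos x hx.2).ne')
  have hpq : u p / v p ≤ u q / v q := hqmax hpK
  have hqΩ : q ∈ Ω := by
    by_contra hq
    have hq0 : u q = 0 := hu_bdry q ⟨hqK.1, by rwa [hΩ.interior_eq]⟩
    have := div_pos (hu_pos p hp.1) (hv_pos p hp.2)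
    rw [hq0, zero_div] at hpq
    linarith
  have hqT : q ∉ interior T := by
    intro hqT
    have hnhds : Ω ∩ interior T ∈ 𝓝 q := (hΩ.inter isOpen_interior).mem_nhds ⟨hqΩ, hqT⟩
    refine not_isLocalMax_div_of_lap2_eq (hu.contDiffAt (hΩ.mem_nhds hqΩ)) hv.contDiffAt
      (hu_eq q hqΩ) (hv_eq q) hlam (hu_pos q hqΩ) ?_ ?_
    · filter_upwards [hnhds] with x hx using hv_pos x (interior_subset hx.2)
    · exact hqmax.isLocalMax (Filter.mem_of_superset hnhds
        fun x hx ↦ ⟨subset_closure hx.1, interior_subset hx.2⟩)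
  have huq : u q < c := not_le.mp fun h ↦ hqT (hsuper ⟨hqΩ, h⟩)
  have hq_lt : u q / v q < 1 := (div_lt_one (hv_pos q hqK.2)).mpr (huq.trans (hv_gt q hqK.2))
  exact (div_lt_one (hv_pos p hp.2)).mp (hpq.trans_lt hq_lt)

theorem stmt_9_general (C : ℝ) : ∃ c₁ : ℝ, 0 < c₁ ∧
    ∀ (Ω : Set (ℝ × ℝ)) (u : ℝ × ℝ → ℝ) (lam L ε α : ℝ),
      IsOpen Ω → Convex ℝ Ω → Bornology.IsBounded Ω →
      ContinuousOn u (closure Ω) → ContDiffOn ℝ 2 u Ω →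
      (∀ p ∈ Ω, lap2 u p = -lam * u p) →
      (∀ p ∈ frontier Ω, u p = 0) →
      (∀ p ∈ Ω, 0 < u p ∧ u p ≤ 1) →
      1 ≤ L → 0 < ε → ε ≤ 1 / 2 →
      lam ≤ π ^ 2 + C * L⁻¹ ^ 2 →
      0 < α →
      ({p ∈ Ω | 1 - ε ≤ u p} ⊆ {p : ℝ × ℝ | |p.2| ≤ α}) →
      α < c₁ * Real.sqrt ε →
      ∀ p ∈ Ω, |p.2| ≤ α → u p < 1 := by
  set b := √(π ^ 2 + |C| + 1)
  have hb_pos : 0 < b := by positivity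
  have hb_sq : b ^ 2 = π ^ 2 + |C| + 1 := sq_sqrt (by positivity)
  refine ⟨1 / b, by positivity, ?_⟩
  intro Ω u lam L ε α hΩ _ hΩ_bdd hu_cont hu hu_eq hu_bdry hu_bound hL hε hε_half hlam _ hsuper
    hα p hpΩ hpα
  obtain ⟨α', hαα', hα'⟩ := exists_between hα
  have hlam_lt : lam < b ^ 2 := by
    have : L⁻¹ ^ 2 ≤ 1 := pow_le_one₀ (by positivity) (inv_le_one_of_one_le₀ hL)
    nlinarith [le_abs_self C, abs_nonneg C]
  have hcos (y : ℝ) (hy : |y| ≤ α') : 1 - ε < cos (b * y) := by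
    have hby : |b * y| < √ε := by
      rw [abs_mul, abs_of_pos hb_pos]
      calc b * |y| ≤ b * α' := by gcongr
        _ < b * (1 / b * √ε) := by gcongr
        _ = √ε := by field_simp
    have := sq_lt_sq' (neg_lt_of_abs_lt hby) (lt_of_abs_lt hby)
    nlinarith [one_sub_sq_div_two_le_cos (x := b * y), sq_sqrt hε.le]
  have hstrip : {p : ℝ × ℝ | |p.2| ≤ α} ⊆ interior {p : ℝ × ℝ | |p.2| ≤ α'} :=
    fun x hx ↦ interior_maximal (fun y hy ↦ le_of_lt hy)
      (isOpen_lt continuous_snd.abs continuous_const) (lt_of_le_of_lt hx hαα')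
  have hcomp := lt_of_superlevelSet_subset_interior hΩ hΩ_bdd
    (isClosed_le continuous_snd.abs continuous_const) hu_cont hu hu_eq hu_bdry
    (fun p hp ↦ (hu_bound p hp).1) (v := fun x ↦ cos (b * x.2)) (by fun_prop)
    (lap2_cos_mul_snd b) hlam_lt (by linarith) (fun x hx ↦ hcos x.2 hx) (hsuper.trans hstrip)
  exact (hcomp p ⟨hpΩ, hpα.trans hαα'.le⟩).trans_le (cos_le_one _)

/-- If `u` is the first Dirichlet eigenfunction (normalized, `0 < u ≤ 1`,
`Δu = -λu`, `u = 0` on `∂Ω`, `λ ≤ π² + C L⁻²`) and its superlevel set `{u ≥ 1-ε}` is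
contained in the strip `{|y| ≤ α}` with `α < c₁ √ε` for a sufficiently small constant
`c₁` depending only on `C`, then `u < 1` on the strip; i.e. the maximum value `1` cannot
be attained there. -/
theorem stmt_9 (C : ℝ) (hC : 0 < C) : ∃ c₁ : ℝ, 0 < c₁ ∧
    ∀ (Ω : Set (ℝ × ℝ)) (u : ℝ × ℝ → ℝ) (lam L ε α : ℝ),
      IsOpen Ω → Convex ℝ Ω → Bornology.IsBounded Ω →
      ContinuousOn u (closure Ω) → ContDiffOn ℝ 2 u Ω →
      (∀ p ∈ Ω, lap2 u p = -lam * u p) →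
      (∀ p ∈ frontier Ω, u p = 0) →
      (∀ p ∈ Ω, 0 < u p ∧ u p ≤ 1) →
      1 ≤ L → 0 < ε → ε ≤ 1 / 2 →
      lam ≤ π ^ 2 + C * L⁻¹ ^ 2 →
      0 < α →
      ({p ∈ Ω | 1 - ε ≤ u p} ⊆ {p : ℝ × ℝ | |p.2| ≤ α}) →
      α < c₁ * Real.sqrt ε →
      ∀ p ∈ Ω, |p.2| ≤ α → u p < 1 :=
  stmt_9_general C
end

section
/- Let e(x,y) = √(2/h(x))·sin(π(y - f₁(x))/h(x)) with h = f₂ - f₁. If h is C¹ with |h'(x)| ≤ δ and h(x) ≥ 1/2, and f₁ is C¹ with |f₁'(x)| ≤ δ, then |∂_x e(x,y)| ≤ C·δ for all y ∈ [f₁(x), f₂(x)], for an absolute constant C. -/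
/-!
Write `s = (y - f₁)/h ∈ [0, 1]`, so `e = √(2/h) sin(π s)`. The chain rule gives
`∂ₓe = -(√(2/h)/h) (h'/2 · sin(π s) + π (f₁' + s h') cos(π s))`, and with `h ≥ 1/2` the
prefactor is at most `4` while the bracket is at most `δ/2 + 2πδ`; hence `C = 2 + 8π`.
-/

open Real

section

variable {f₁ h : ℝ → ℝ} {x b c : ℝ}

theorem hasDerivAt_sqrt_two_div (hh : HasDerivAt h b x) (hpos : 0 < h x) :
    HasDerivAt (fun t => √(2 / h t)) (-√(2 / h x) / h x * (b / 2)) x := by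
  have hsq : √(2 / h x) ^ 2 = 2 / h x := sq_sqrt (by positivity)
  refine (((hasDerivAt_const x (2 : ℝ)).div hh hpos.ne').sqrt
    (div_pos two_pos hpos).ne').congr_deriv ?_
  simp only [Pi.div_apply]
  field_simp
  rw [hsq]
  field_simp
  ring

theorem hasDerivAt_sub_div (y : ℝ) (hf : HasDerivAt f₁ c x) (hh : HasDerivAt h b x)
    (hne : h x ≠ 0) :
    HasDerivAt (fun t => (y - f₁ t) / h t) (-(c + (y - f₁ x) / h x * b) / h x) x := by
  refine (((hasDerivAt_const x y).sub hf).div hh hne).congr_deriv ?_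
  simp only [Pi.sub_apply]
  field_simp
  ring

theorem hasDerivAt_sqrt_two_div_mul_sin (y : ℝ) (hf : HasDerivAt f₁ c x)
    (hh : HasDerivAt h b x) (hpos : 0 < h x) :
    HasDerivAt (fun t => √(2 / h t) * sin (π * (y - f₁ t) / h t))
      (-√(2 / h x) / h x * (b / 2 * sin (π * ((y - f₁ x) / h x)) +
        π * (c + (y - f₁ x) / h x * b) * cos (π * ((y - f₁ x) / h x)))) x := by
  simp_rw [mul_div_assoc]
  refine ((hasDerivAt_sqrt_two_div hh hpos).mul
    (((hasDerivAt_sub_div y hf hh hpos.ne').const_mul π).sin)).congr_deriv ?_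
  field_simp
  ring

end

theorem abs_sqrt_two_div_mul_le {H s b c δ : ℝ} (hH : 1 / 2 ≤ H) (hs₀ : 0 ≤ s) (hs₁ : s ≤ 1)
    (hb : |b| ≤ δ) (hc : |c| ≤ δ) :
    |√(2 / H) / H * (b / 2 * sin (π * s) + π * (c + s * b) * cos (π * s))| ≤
      (2 + 8 * π) * δ := by
  have hH₀ : 0 < H := by linarith
  have hsqrt : √(2 / H) ≤ 2 := by
    rw [sqrt_le_left (by norm_num), div_le_iff₀ hH₀]; linarith
  have hfactor : |√(2 / H) / H| ≤ 4 := by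
    rw [abs_of_nonneg (by positivity), div_le_iff₀ hH₀]; nlinarith
  have hsin : |b / 2 * sin (π * s)| ≤ δ / 2 := by
    rw [abs_mul, abs_div, abs_two]
    nlinarith [abs_sin_le_one (π * s), abs_nonneg b, abs_nonneg (sin (π * s))]
  have hcs : |c + s * b| ≤ 2 * δ := by
    calc |c + s * b| ≤ |c| + |s * b| := abs_add_le _ _
      _ = |c| + s * |b| := by rw [abs_mul, abs_of_nonneg hs₀]
      _ ≤ 2 * δ := by nlinarith [abs_nonneg b]
  have hcos : |π * (c + s * b) * cos (π * s)| ≤ 2 * π * δ := by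
    rw [abs_mul, abs_mul, abs_of_pos pi_pos]
    have := mul_le_mul hcs (abs_cos_le_one (π * s)) (abs_nonneg _) (by linarith [abs_nonneg c])
    nlinarith [pi_pos]
  calc _ ≤ 4 * (δ / 2 + 2 * π * δ) := by
        rw [abs_mul]
        exact mul_le_mul hfactor
          ((abs_add_le (b / 2 * sin (π * s)) _).trans (add_le_add hsin hcos))
          (abs_nonneg _) (by norm_num)
    _ = (2 + 8 * π) * δ := by ring

/-- For `e(x,y) = √(2/h(x)) sin(π(y - f₁(x))/h(x))` with `h = f₂ - f₁`,
if `|h'(x)| ≤ δ`, `|f₁'(x)| ≤ δ`, `1/2 ≤ h(x) ≤ 1`, then `|∂_x e(x,y)| ≤ C δ` for all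
`y ∈ [f₁(x), f₂(x)]`, for an absolute constant `C`. -/
theorem stmt_15 : ∃ C : ℝ, 0 < C ∧
    ∀ (f₁ f₂ : ℝ → ℝ) (x δ : ℝ),
      0 < δ →
      DifferentiableAt ℝ f₁ x → DifferentiableAt ℝ f₂ x →
      |deriv (fun t => f₂ t - f₁ t) x| ≤ δ →
      |deriv f₁ x| ≤ δ →
      1 / 2 ≤ f₂ x - f₁ x → f₂ x - f₁ x ≤ 1 →
      ∀ y ∈ Set.Icc (f₁ x) (f₂ x),
        |deriv (fun t => Real.sqrt (2 / (f₂ t - f₁ t)) *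
          Real.sin (π * (y - f₁ t) / (f₂ t - f₁ t))) x| ≤ C * δ := by
  refine ⟨2 + 8 * π, by positivity, ?_⟩
  intro f₁ f₂ x δ _ hf₁ hf₂ hh' hf₁' hh _ y ⟨hy₁, hy₂⟩
  have hdiff : HasDerivAt (fun t => f₂ t - f₁ t) (deriv f₂ x - deriv f₁ x) x :=
    hf₂.hasDerivAt.sub hf₁.hasDerivAt
  have hpos : 0 < f₂ x - f₁ x := by linarith
  rw [hdiff.deriv] at hh'
  rw [(hasDerivAt_sqrt_two_div_mul_sin y hf₁.hasDerivAt hdiff hpos).deriv, neg_div, neg_mul,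
    abs_neg]
  exact abs_sqrt_two_div_mul_le hh (div_nonneg (by linarith) hpos.le)
    ((div_le_one hpos).2 (by linarith)) hh' hf₁'
end

section
/- Suppose v₂, w are functions on a square B = [x₀, x₀+c] × [y₀, y₀+c] with v₂ = ∂_x∂_y w, |v₂| ≥ m everywhere on B with v₂ of constant sign, and (∫_B |∇w|²)^{1/2} ≤ η. Then m ≤ C·η/c² for an absolute constant C. -/
/-!
On each horizontal slice `g = ∂_y w(·, y)` grows at rate at least `m`, so with `h = c/2` one has
`|g(x + h) - g(x)| ≥ m h`, hence `g(x)² + g(x + h)² ≥ m² h² / 2`; integrating over `[x₀, x₀ + h]`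
gives `∫ g² ≥ m² c³ / 16` on every slice. Fubini yields `∫_B (∂_y w)² ≥ m² c⁴ / 16`, while
`(∂_y w)² ≤ ‖∇w‖²`, so `m² c⁴ / 16 ≤ η²`, i.e. `m ≤ 4 η / c²`.
-/

open MeasureTheory Set

theorem intervalIntegral.integral_add_comp_add_right {E : Type*} [NormedAddCommGroup E]
    [NormedSpace ℝ E] {f : ℝ → E} {a h : ℝ} (h₁ : IntervalIntegrable f volume a (a + h))
    (h₂ : IntervalIntegrable f volume (a + h) (a + h + h)) :
    ∫ x in a..a + h, (f x + f (x + h)) = ∫ x in a..a + h + h, f x := by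
  have h₂' : IntervalIntegrable (fun x => f (x + h)) volume a (a + h) := by
    simpa using h₂.comp_add_right h
  rw [intervalIntegral.integral_add h₁ h₂', intervalIntegral.integral_comp_add_right,
    intervalIntegral.integral_add_adjacent_intervals h₁ h₂]

theorem le_integral_sq_of_le_deriv {g : ℝ → ℝ} {a b m : ℝ} (hab : a ≤ b) (hm : 0 < m)
    (hg : ∀ x ∈ Icc a b, m ≤ deriv g x) : m ^ 2 * (b - a) ^ 3 / 16 ≤ ∫ x in a..b, g x ^ 2 := by
  obtain ⟨h, rfl⟩ : ∃ h, b = a + h + h := ⟨(b - a) / 2, by ring⟩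
  have hdiff : ∀ x ∈ Icc a (a + h + h), DifferentiableAt ℝ g x := fun x hx =>
    differentiableAt_of_deriv_ne_zero (hm.trans_le (hg x hx)).ne'
  have hcont : ContinuousOn g (Icc a (a + h + h)) := fun x hx =>
    (hdiff x hx).continuousAt.continuousWithinAt
  have hgrowth := (convex_Icc _ _).mul_sub_le_image_sub_of_le_deriv hcont
    (fun x hx => (hdiff x (interior_subset hx)).differentiableWithinAt)
    (fun x hx => hg x (interior_subset hx))
  have hsq : ∀ x ∈ Icc a (a + h), m ^ 2 * h ^ 2 / 2 ≤ g x ^ 2 + g (x + h) ^ 2 := by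
    rintro x ⟨hax, hxh⟩
    have hmh : m * h ≤ g (x + h) - g x := by
      simpa using hgrowth x ⟨hax, by linarith⟩ (x + h) ⟨by linarith, by linarith⟩ (by linarith)
    have hh : 0 ≤ m * h := by nlinarith
    nlinarith [sq_nonneg (g x + g (x + h)), mul_le_mul hmh hmh hh (hh.trans hmh)]
  have hint : ∀ u v, a ≤ u → u ≤ v → v ≤ a + h + h →
      IntervalIntegrable (fun x => g x ^ 2) volume u v := fun u v hu huv hv =>
    ((hcont.pow 2).mono (by rw [uIcc_of_le huv]; exact Icc_subset_Icc hu hv)).intervalIntegrable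
  have hint₁ := hint a (a + h) le_rfl (by linarith) (by linarith)
  have hint₂ := hint (a + h) (a + h + h) (by linarith) (by linarith) le_rfl
  calc m ^ 2 * (a + h + h - a) ^ 3 / 16 = ∫ x in a..a + h, m ^ 2 * h ^ 2 / 2 := by
        rw [intervalIntegral.integral_const, smul_eq_mul]; ring
    _ ≤ ∫ x in a..a + h, (g x ^ 2 + g (x + h) ^ 2) :=
      intervalIntegral.integral_mono_on (by linarith) intervalIntegrable_const
        (hint₁.add (by simpa using hint₂.comp_add_right h)) hsq
    _ = ∫ x in a..a + h + h, g x ^ 2 := intervalIntegral.integral_add_comp_add_right hint₁ hint₂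

theorem le_integral_sq_of_deriv_bounded_away {g : ℝ → ℝ} {a b m : ℝ} (hab : a ≤ b) (hm : 0 < m)
    (hg : (∀ x ∈ Icc a b, m ≤ deriv g x) ∨ ∀ x ∈ Icc a b, deriv g x ≤ -m) :
    m ^ 2 * (b - a) ^ 3 / 16 ≤ ∫ x in a..b, g x ^ 2 := by
  rcases hg with hg | hg
  · exact le_integral_sq_of_le_deriv hab hm hg
  · simpa using le_integral_sq_of_le_deriv (g := -g) hab hm fun x hx => by
      simpa [deriv.neg'] using neg_le_neg (hg x hx)

theorem DifferentiableAt.deriv_comp_prodMk_right {E F : Type*} [NormedAddCommGroup E]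
    [NormedSpace ℝ E] [NormedAddCommGroup F] [NormedSpace ℝ F] {w : E × ℝ → F} {p : E × ℝ}
    (hw : DifferentiableAt ℝ w p) : deriv (fun y => w (p.1, y)) p.2 = fderiv ℝ w p (0, 1) :=
  (hw.hasFDerivAt.comp_hasDerivAt p.2 ((hasDerivAt_const _ _).prodMk (hasDerivAt_id _))).deriv

theorem integrableOn_interior_comp_fderiv {E F G : Type*} [NormedAddCommGroup E]
    [NormedSpace ℝ E] [MeasurableSpace E] [OpensMeasurableSpace E] [NormedAddCommGroup F]
    [NormedSpace ℝ F] [NormedAddCommGroup G] {μ : Measure E} [IsFiniteMeasureOnCompacts μ]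
    {K : Set E} {w : E → F} (hK : IsCompact K) (hKu : UniqueDiffOn ℝ K) (hw : ContDiffOn ℝ 1 w K)
    {Ψ : (E →L[ℝ] F) → G} (hΨ : Continuous Ψ) :
    IntegrableOn (fun p => Ψ (fderiv ℝ w p)) (interior K) μ := by
  have hint : IntegrableOn (fun p => Ψ (fderivWithin ℝ w K p)) K μ :=
    (hΨ.comp_continuousOn (hw.continuousOn_fderivWithin hKu le_rfl)).integrableOn_compact hK
  refine (hint.mono_set interior_subset).congr_fun (fun p hp => ?_) isOpen_interior.measurableSet
  exact congrArg Ψ (fderivWithin_of_mem_nhds (mem_interior_iff_mem_nhds.1 hp))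

theorem setIntegral_interior_sq_fderiv_apply_le {E : Type*} [NormedAddCommGroup E]
    [NormedSpace ℝ E] [FiniteDimensional ℝ E] [MeasurableSpace E] [BorelSpace E]
    {μ : Measure E} [μ.IsAddHaarMeasure] {K : Set E} {w : E → ℝ} (hK : IsCompact K)
    (hKc : Convex ℝ K) (hKi : (interior K).Nonempty) (hw : ContDiffOn ℝ 1 w K) {v : E}
    (hv : ‖v‖ ≤ 1) :
    ∫ p in interior K, fderiv ℝ w p v ^ 2 ∂μ ≤ ∫ p in K, ‖fderiv ℝ w p‖ ^ 2 ∂μ := by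
  have hKu := uniqueDiffOn_convex hKc hKi
  rw [← setIntegral_congr_set (interior_ae_eq_of_null_frontier (hKc.addHaar_frontier μ))]
  refine setIntegral_mono_on
    (integrableOn_interior_comp_fderiv hK hKu hw (Ψ := fun L => L v ^ 2) (by fun_prop))
    (integrableOn_interior_comp_fderiv hK hKu hw (Ψ := fun L => ‖L‖ ^ 2) (by fun_prop))
    isOpen_interior.measurableSet fun p _ => ?_
  have : |fderiv ℝ w p v| ≤ ‖fderiv ℝ w p‖ :=
    ((fderiv ℝ w p).le_opNorm v).trans (mul_le_of_le_one_right (norm_nonneg _) hv)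
  simpa only [sq_abs] using pow_le_pow_left₀ (abs_nonneg _) this 2

theorem mul_le_setIntegral_prod {α β : Type*} [MeasurableSpace α] [MeasurableSpace β]
    {μ : Measure α} {ν : Measure β} [SFinite μ] [SFinite ν] {f : α × β → ℝ} {s : Set α}
    {t : Set β} {L : ℝ} (hf : IntegrableOn f (s ×ˢ t) (μ.prod ν)) (ht : MeasurableSet t)
    (hνt : ν t ≠ ⊤) (hL : ∀ y ∈ t, L ≤ ∫ x in s, f (x, y) ∂μ) :
    L * ν.real t ≤ ∫ p in s ×ˢ t, f p ∂μ.prod ν := by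
  rw [IntegrableOn, ← Measure.prod_restrict] at hf
  rw [← Measure.prod_restrict, integral_prod_symm _ hf]
  exact setIntegral_ge_of_const_le_real ht hνt hL hf.integral_prod_right

theorem le_setIntegral_sq_fderiv_apply_of_mixed_deriv {w : ℝ × ℝ → ℝ} {a b a' b' m : ℝ}
    (hab : a ≤ b) (hab' : a' ≤ b') (hm : 0 < m)
    (hw : DifferentiableOn ℝ w (Ioo a b ×ˢ Ioo a' b'))
    (hint : IntegrableOn (fun p => fderiv ℝ w p (0, 1) ^ 2) (Ioo a b ×ˢ Ioo a' b'))
    (hsign : (∀ p ∈ Icc a b ×ˢ Icc a' b',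
          m ≤ deriv (fun x => deriv (fun y => w (x, y)) p.2) p.1) ∨
        (∀ p ∈ Icc a b ×ˢ Icc a' b', deriv (fun x => deriv (fun y => w (x, y)) p.2) p.1 ≤ -m)) :
    m ^ 2 * (b - a) ^ 3 / 16 * (b' - a') ≤
      ∫ p in Ioo a b ×ˢ Ioo a' b', fderiv ℝ w p (0, 1) ^ 2 := by
  rw [Measure.volume_eq_prod] at hint ⊢
  rw [← Real.volume_real_Ioo_of_le hab']
  refine mul_le_setIntegral_prod hint measurableSet_Ioo measure_Ioo_lt_top.ne fun y hy => ?_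
  have hslice : ∫ x in Ioo a b, fderiv ℝ w (x, y) (0, 1) ^ 2 =
      ∫ x in a..b, deriv (fun y => w (x, y)) y ^ 2 := by
    rw [intervalIntegral.integral_of_le hab, integral_Ioc_eq_integral_Ioo]
    refine setIntegral_congr_fun measurableSet_Ioo fun x hx => ?_
    have hd : DifferentiableAt ℝ w (x, y) :=
      hw.differentiableAt ((isOpen_Ioo.prod isOpen_Ioo).mem_nhds ⟨hx, hy⟩)
    exact congrArg (· ^ 2) hd.deriv_comp_prodMk_right.symm
  rw [hslice]
  exact le_integral_sq_of_deriv_bounded_away hab hm <| hsign.imp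
    (fun h x hx => h (x, y) ⟨hx, Ioo_subset_Icc_self hy⟩)
    (fun h x hx => h (x, y) ⟨hx, Ioo_subset_Icc_self hy⟩)

/-- If `w` is `C²` on a closed square `B` of side `c`, the mixed derivative
`v₂ = ∂_x∂_y w` has constant sign with `|v₂| ≥ m > 0` on `B`, and `(∫_B |∇w|²)^{1/2} ≤ η`,
then `m ≤ C η / c²` for an absolute constant `C`. -/
theorem stmt_16 : ∃ C : ℝ, 0 < C ∧
    ∀ (w : ℝ × ℝ → ℝ) (x₀ y₀ c m η : ℝ),
      0 < c → 0 < m → 0 ≤ η →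
      ContDiffOn ℝ 2 w (Set.Icc x₀ (x₀ + c) ×ˢ Set.Icc y₀ (y₀ + c)) →
      ((∀ p ∈ Set.Icc x₀ (x₀ + c) ×ˢ Set.Icc y₀ (y₀ + c),
          m ≤ deriv (fun x => deriv (fun y => w (x, y)) p.2) p.1) ∨
        (∀ p ∈ Set.Icc x₀ (x₀ + c) ×ˢ Set.Icc y₀ (y₀ + c),
          deriv (fun x => deriv (fun y => w (x, y)) p.2) p.1 ≤ -m)) →
      (∫ p in Set.Icc x₀ (x₀ + c) ×ˢ Set.Icc y₀ (y₀ + c), ‖fderiv ℝ w p‖ ^ 2) ≤ η ^ 2 →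
      m ≤ C * η / c ^ 2 := by
  refine ⟨4, by norm_num, fun w x₀ y₀ c m η hc hm hη hw hsign hL2 => ?_⟩
  set B := Icc x₀ (x₀ + c) ×ˢ Icc y₀ (y₀ + c)
  have hBint : interior B = Ioo x₀ (x₀ + c) ×ˢ Ioo y₀ (y₀ + c) := by
    rw [interior_prod_eq, interior_Icc, interior_Icc]
  have hBc : IsCompact B := isCompact_Icc.prod isCompact_Icc
  have hBconv : Convex ℝ B := (convex_Icc _ _).prod (convex_Icc _ _)
  have hBne : (interior B).Nonempty :=
    hBint ▸ (nonempty_Ioo.2 (by linarith)).prod (nonempty_Ioo.2 (by linarith))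
  have hw₁ : ContDiffOn ℝ 1 w B := hw.of_le one_le_two
  have hlower := le_setIntegral_sq_fderiv_apply_of_mixed_deriv (by linarith) (by linarith) hm
    ((hw₁.differentiableOn one_ne_zero).mono (hBint ▸ interior_subset))
    (hBint ▸ integrableOn_interior_comp_fderiv hBc (uniqueDiffOn_convex hBconv hBne) hw₁
      (Ψ := fun L => L (0, 1) ^ 2) (by fun_prop)) hsign
  have hupper := setIntegral_interior_sq_fderiv_apply_le (μ := volume) hBc hBconv hBne hw₁
    (v := ((0 : ℝ), (1 : ℝ))) (by simp)
  rw [hBint] at hupper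
  have hsq : (m * c ^ 2 / 4) ^ 2 ≤ η ^ 2 := by
    simp only [add_sub_cancel_left] at hlower
    nlinarith
  rw [le_div_iff₀ (by positivity)]
  nlinarith [(pow_le_pow_iff_left₀ (by positivity) hη two_ne_zero).1 hsq]
end
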